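/- arXiv:2305.08236 — 3 statements merged into one kernel-verified Lean document; each statement's English description precedes it below -/
import Mathlib

section
/- Let Γ be an alphabet with |Γ| ≥ 2, and let q = (s,w,c) and q' = (s',w,c) be (ℓ,w,c)-swg-queries over variables V and types Γ. If Mod_Γ(q) ⊆ Mod_Γ(q'), then there exists a homomorphism h (a substitution with h(s') = s) from q' to q. -/
/-- Witness for matching of an swg-query. -/
def Witness {V Γ : Type*} {ℓ n : ℕ} (s : Fin ℓ → V ⊕ Γ) (w : ℕ)
    (cm : ℕ → ℕ) (cp : ℕ → ℕ∞) (t : Fin n → Γ)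
    (μ : V ⊕ Γ → Γ) (e : Fin ℓ → Fin n) : Prop :=
  (∀ γ : Γ, μ (Sum.inr γ) = γ) ∧ StrictMono e ∧
  (∀ i j : Fin ℓ, (e j : ℕ) < (e i : ℕ) + w) ∧
  (∀ i : ℕ, ∀ h : i + 1 < ℓ,
    cm i ≤ (e ⟨i + 1, h⟩ : ℕ) - (e ⟨i, Nat.lt_of_succ_lt h⟩ : ℕ) - 1 ∧
    (((e ⟨i + 1, h⟩ : ℕ) - (e ⟨i, Nat.lt_of_succ_lt h⟩ : ℕ) - 1 : ℕ) : ℕ∞) ≤ cp i) ∧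
  (∀ i : Fin ℓ, μ (s i) = t (e i))

/-- The trace `t` matches the swg-query. -/
def Matches {V Γ : Type*} {ℓ n : ℕ} (s : Fin ℓ → V ⊕ Γ) (w : ℕ)
    (cm : ℕ → ℕ) (cp : ℕ → ℕ∞) (t : Fin n → Γ) : Prop :=
  ∃ μ e, Witness s w cm cp t μ e

/-- Separating substitutions: distinct symbols can be mapped to distinct letters. -/
lemma sep_subst {V Γ : Type*} (a b : Γ) (hab : a ≠ b) (x y : V ⊕ Γ) (hxy : x ≠ y) :
    ∃ μ : V ⊕ Γ → Γ, (∀ γ : Γ, μ (Sum.inr γ) = γ) ∧ μ x ≠ μ y := by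
  classical
  cases x with
  | inl v =>
    cases y with
    | inl u =>
      refine ⟨Sum.elim (fun z => if z = v then a else b) id, fun γ => rfl, ?_⟩
      have huv : u ≠ v := fun h => hxy (by rw [h])
      simp [huv]
      exact hab
    | inr γ =>
      refine ⟨Sum.elim (fun _ => if γ = a then b else a) id, fun δ => rfl, ?_⟩
      simp only [Sum.elim_inl, Sum.elim_inr, id_eq]
      by_cases h : γ = a <;> simp [h]
      · exact fun hh => hab hh.symm
      · exact fun hh => h hh.symm
  | inr γ =>
    cases y with
    | inl v =>
      refine ⟨Sum.elim (fun _ => if γ = a then b else a) id, fun δ => rfl, ?_⟩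
      simp only [Sum.elim_inl, Sum.elim_inr, id_eq]
      by_cases h : γ = a <;> simp [h]
      exact hab
    | inr δ =>
      refine ⟨Sum.elim (fun _ => a) id, fun δ => rfl, ?_⟩
      simpa using fun h => hxy (by rw [h])

/-- For `|Γ| ≥ 2` and swg-queries `q = (s,w,c)`, `q' = (s',w,c)`, containment
`Mod_Γ(q) ⊆ Mod_Γ(q')` implies the existence of a homomorphism from `q'` to `q`. -/
theorem stmt5 {V Γ : Type*} {ℓ : ℕ} (hℓ : 0 < ℓ) (s s' : Fin ℓ → V ⊕ Γ) (w : ℕ)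
    (cm : ℕ → ℕ) (cp : ℕ → ℕ∞)
    (hΓ : ∃ a b : Γ, a ≠ b)
    (hw : ℓ ≤ w)
    (hc : ∀ i, i + 1 < ℓ → (cm i : ℕ∞) ≤ cp i)
    (hsum : ℓ + ∑ i ∈ Finset.range (ℓ - 1), cm i ≤ w)
    (hcont : ∀ (n : ℕ), 0 < n → ∀ t : Fin n → Γ,
      Matches s w cm cp t → Matches s' w cm cp t) :
    ∃ h : V ⊕ Γ → V ⊕ Γ, (∀ γ : Γ, h (Sum.inr γ) = Sum.inr γ) ∧ ∀ i, h (s' i) = s i := by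
  classical
  obtain ⟨a, b, hab⟩ := hΓ
  set N : ℕ := ℓ + ∑ i ∈ Finset.range (ℓ - 1), cm i with hNdef
  set E : ℕ → ℕ := fun i => i + ∑ k ∈ Finset.range i, cm k with hEdef
  have hEsucc : ∀ i, E (i + 1) = E i + (cm i + 1) := by
    intro i
    simp only [hEdef, Finset.sum_range_succ]
    ring
  have hEmono : StrictMono E :=
    strictMono_nat_of_lt_succ (fun i => by rw [hEsucc]; omega)
  have hEtop : E (ℓ - 1) + 1 = N := by
    simp only [hEdef, hNdef]
    omega
  have hElt : ∀ i, i < ℓ → E i < N := by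
    intro i hi
    have h1 : E i ≤ E (ℓ - 1) := hEmono.monotone (by omega)
    omega
  have hNw : N ≤ w := hsum
  set eC : Fin ℓ → Fin N := fun i => ⟨E i, hElt i i.2⟩ with heCdef
  have heCinj : Function.Injective eC := by
    intro x y hxy
    have : E (x : ℕ) = E (y : ℕ) := congrArg Fin.val hxy
    exact Fin.ext (hEmono.injective this)
  -- key: for every substitution μ there is μ' with μ'(s' i) = μ(s i) for all i
  have key : ∀ μ : V ⊕ Γ → Γ, (∀ γ, μ (Sum.inr γ) = γ) →
      ∃ μ' : V ⊕ Γ → Γ, (∀ γ, μ' (Sum.inr γ) = γ) ∧ ∀ i, μ' (s' i) = μ (s i) := by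
    intro μ hμ
    set t : Fin N → Γ :=
      fun k => if h : ∃ i : Fin ℓ, eC i = k then μ (s h.choose) else a with htdef
    have hteC : ∀ i, t (eC i) = μ (s i) := by
      intro i
      have hex : ∃ j : Fin ℓ, eC j = eC i := ⟨i, rfl⟩
      have : t (eC i) = μ (s hex.choose) := dif_pos hex
      rw [this, heCinj hex.choose_spec]
    have hmatch : Matches s w cm cp t := by
      refine ⟨μ, eC, hμ, ?_, ?_, ?_, fun i => (hteC i).symm⟩
      · intro x y hxy
        exact hEmono (show (x : ℕ) < (y : ℕ) from hxy)
      · intro i j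
        have h2 := (eC j).2
        omega
      · intro i hi
        have h1 := hEsucc i
        have heq : (eC ⟨i + 1, hi⟩ : ℕ) - (eC ⟨i, Nat.lt_of_succ_lt hi⟩ : ℕ) - 1 = cm i := by
          show E (i + 1) - E i - 1 = cm i
          omega
        rw [heq]
        exact ⟨le_refl _, hc i hi⟩
    obtain ⟨μ', e', hfix, hmono, hwin, hgap, hval⟩ := hcont N (by omega) t hmatch
    -- the embedding e' is forced to be eC
    set g : ℕ → ℕ := fun i => if h : i < ℓ then (e' ⟨i, h⟩ : ℕ) else 0 with hgdef
    have hg : ∀ i (h : i < ℓ), g i = (e' ⟨i, h⟩ : ℕ) := fun i h => dif_pos h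
    have gapge : ∀ i, i + 1 < ℓ → g i + (cm i + 1) ≤ g (i + 1) := by
      intro i h
      rw [hg i (Nat.lt_of_succ_lt h), hg (i + 1) h]
      have h1 := (hgap i h).1
      have h2 : (e' ⟨i, Nat.lt_of_succ_lt h⟩ : ℕ) < (e' ⟨i + 1, h⟩ : ℕ) :=
        hmono (show (⟨i, Nat.lt_of_succ_lt h⟩ : Fin ℓ) < ⟨i + 1, h⟩ from by
          simp [Fin.lt_def])
      omega
    have lower : ∀ i, i < ℓ → E i ≤ g i := by
      intro i
      induction i with
      | zero => intro h; simp [hEdef]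
      | succ n ih =>
        intro h
        have h1 := gapge n h
        have h2 := ih (Nat.lt_of_succ_lt h)
        rw [hEsucc]
        omega
    have top : g (ℓ - 1) = E (ℓ - 1) := by
      have h1 := lower (ℓ - 1) (by omega)
      have h2 : g (ℓ - 1) < N := by
        rw [hg (ℓ - 1) (by omega)]
        exact (e' ⟨ℓ - 1, by omega⟩).2
      omega
    have upper : ∀ d, ∀ j, j < ℓ → j = ℓ - 1 - d → g j ≤ E j := by
      intro d
      induction d with
      | zero =>
        intro j hj hje
        have : j = ℓ - 1 := by omega
        rw [this, top]
      | succ n ih =>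
        intro j hj hje
        by_cases hcase : ℓ - 1 ≤ n
        · exact ih j hj (by omega)
        · have hj1 : j + 1 < ℓ := by omega
          have h1 := gapge j hj1
          have h2 := ih (j + 1) hj1 (by omega)
          have h3 := hEsucc j
          omega
    have geq : ∀ i, i < ℓ → g i = E i := by
      intro i hi
      have h1 := lower i hi
      have h2 := upper (ℓ - 1 - i) i hi (by omega)
      omega
    have heeq : ∀ i : Fin ℓ, e' i = eC i := by
      intro i
      apply Fin.ext
      have h1 := geq (i : ℕ) i.2
      rw [hg (i : ℕ) i.2] at h1
      simpa using h1
    refine ⟨μ', hfix, fun i => ?_⟩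
    rw [hval i, heeq i, hteC i]
  -- structural claims
  have claim1 : ∀ i j, s' i = s' j → s i = s j := by
    intro i j hij
    by_contra hne
    obtain ⟨μ, hfix, hneq⟩ := sep_subst a b hab (s i) (s j) hne
    obtain ⟨μ', hfix', hval⟩ := key μ hfix
    exact hneq (by rw [← hval i, hij, hval j])
  have claim2 : ∀ i γ, s' i = Sum.inr γ → s i = Sum.inr γ := by
    intro i γ hi
    by_contra hne
    obtain ⟨μ, hfix, hneq⟩ := sep_subst a b hab (s i) (Sum.inr γ) hne
    obtain ⟨μ', hfix', hval⟩ := key μ hfix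
    have h1 : μ' (s' i) = μ (s i) := hval i
    rw [hi, hfix'] at h1
    rw [hfix] at hneq
    exact hneq h1.symm
  refine ⟨fun x => match x with
    | Sum.inr γ => Sum.inr γ
    | Sum.inl v => if hv : ∃ i, s' i = Sum.inl v then s hv.choose else Sum.inl v,
    fun γ => rfl, ?_⟩
  intro i
  cases hsi : s' i with
  | inl v =>
    have hv : ∃ j, s' j = Sum.inl v := ⟨i, hsi⟩
    simp only [dif_pos hv]
    exact claim1 hv.choose i (hv.choose_spec.trans hsi.symm)
  | inr γ =>
    exact (claim2 i γ hsi).symm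
end

section
/- Let q be an swgg-query (s, w, C) with generalised gap-size constraints. If there exists a connected non-overlapping sequence of constraints C' = ((c_1^-,c_1^+,r_1)_{j_1},…,(c_m^-,c_m^+,r_m)_{j_m}) from C (with j_{i+1} = j_i + r_i) such that |s| + Σ_{i=1}^m (c_i^- − r_i + 1) > w, then q is unsatisfiable, i.e. no trace t with t ⊨ q exists. -/
/-- `(μ, e)` witnesses that trace `t` matches the swgg-query with query string
`s`, window size `w`, and set `C` of generalised gap-size constraints, where a
constraint `(j, c⁻, c⁺, r) ∈ C` (0-indexed position `j`) demands
`c⁻ ≤ e (j+r) - e j - 1 ≤ c⁺`. -/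
def GWitness {V Γ : Type*} {ℓ n : ℕ} (s : Fin ℓ → V ⊕ Γ) (w : ℕ)
    (C : Set (ℕ × ℕ × ℕ∞ × ℕ)) (t : Fin n → Γ)
    (μ : V ⊕ Γ → Γ) (e : Fin ℓ → Fin n) : Prop :=
  (∀ γ : Γ, μ (Sum.inr γ) = γ) ∧ StrictMono e ∧
  (∀ i j : Fin ℓ, (e j : ℕ) < (e i : ℕ) + w) ∧
  (∀ j cmi cpi r, (j, cmi, cpi, r) ∈ C → ∀ (h1 : j + r < ℓ) (h2 : j < ℓ),
    cmi ≤ (e ⟨j + r, h1⟩ : ℕ) - (e ⟨j, h2⟩ : ℕ) - 1 ∧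
    (((e ⟨j + r, h1⟩ : ℕ) - (e ⟨j, h2⟩ : ℕ) - 1 : ℕ) : ℕ∞) ≤ cpi) ∧
  (∀ i : Fin ℓ, μ (s i) = t (e i))

/-- If a connected non-overlapping sequence of constraints from `C` has
`|s| + Σ (c_i⁻ - r_i + 1) > w`, then the swgg-query `(s, w, C)` is unsatisfiable. -/
theorem stmt7 {V Γ : Type*} {ℓ : ℕ} (s : Fin ℓ → V ⊕ Γ) (w : ℕ)
    (C : Set (ℕ × ℕ × ℕ∞ × ℕ))
    (hC : ∀ j cmi cpi r, (j, cmi, cpi, r) ∈ C →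
      0 < r ∧ r ≤ cmi ∧ (cmi : ℕ∞) ≤ cpi ∧ j + r < ℓ)
    (hwℓ : ℓ ≤ w)
    (m : ℕ) (hm : 0 < m) (jj cmi ri : ℕ → ℕ) (cpi : ℕ → ℕ∞)
    (hmem : ∀ i, i < m → (jj i, cmi i, cpi i, ri i) ∈ C)
    (hconn : ∀ i, i + 1 < m → jj (i + 1) = jj i + ri i)
    (hbig : ℓ + ∑ i ∈ Finset.range m, (cmi i - ri i + 1) > w) :
    ¬ ∃ (n : ℕ) (t : Fin n → Γ) (μ : V ⊕ Γ → Γ) (e : Fin ℓ → Fin n),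
        GWitness s w C t μ e := by
  rintro ⟨n, t, μ, e, hμ, hmono, hwin, hcon, hmatch⟩
  have hr : ∀ i, i < m → 0 < ri i ∧ ri i ≤ cmi i ∧ jj i + ri i < ℓ := by
    intro i hi
    obtain ⟨h1, h2, _, h4⟩ := hC _ _ _ _ (hmem i hi)
    exact ⟨h1, h2, h4⟩
  set F : ℕ → ℕ := fun i => jj 0 + ∑ k ∈ Finset.range i, ri k with hF
  have hFjj : ∀ i, i < m → jj i = F i := by
    intro i
    induction i with
    | zero => intro _; simp [hF]
    | succ k ih =>
      intro hk
      have hk' : k < m := Nat.lt_of_succ_lt hk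
      rw [hconn k hk, ih hk', hF]
      simp [Finset.sum_range_succ]
      omega
  obtain ⟨m', rfl⟩ : ∃ m0, m = m0 + 1 := ⟨m - 1, by omega⟩
  have hFm : F (m' + 1) < ℓ := by
    have hm1 : m' < m' + 1 := Nat.lt_succ_self m'
    have hFm' : F (m' + 1) = F m' + ri m' := by
      simp only [hF, Finset.sum_range_succ]
      omega
    rw [hFm', ← hFjj _ hm1]
    exact (hr _ hm1).2.2
  have hFle : ∀ i, i ≤ (m' + 1) → F i < ℓ := by
    intro i hi
    have : F i ≤ F (m' + 1) := by
      apply Nat.add_le_add_left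
      exact Finset.sum_le_sum_of_subset (Finset.range_subset_range.2 hi)
    omega
  have hℓ : 0 < ℓ := by omega
  have ecast : ∀ (x y : ℕ) (hx : x < ℓ) (hy : y < ℓ), x = y →
      (e ⟨x, hx⟩ : ℕ) = (e ⟨y, hy⟩ : ℕ) := by
    intro x y hx hy h; subst h; rfl
  have hmono' : ∀ (d x : ℕ) (hx : x < ℓ) (hxd : x + d < ℓ),
      (e ⟨x, hx⟩ : ℕ) + d ≤ (e ⟨x + d, hxd⟩ : ℕ) := by
    intro d
    induction d with
    | zero => intro x hx hxd; simp
    | succ k ih =>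
      intro x hx hxd
      have h1 : x + k < ℓ := by omega
      have h2 : (⟨x + k, h1⟩ : Fin ℓ) < ⟨x + (k + 1), hxd⟩ :=
        Fin.mk_lt_mk.2 (by omega)
      have h3 := Fin.lt_def.1 (hmono h2)
      have h4 := ih x hx h1
      omega
  have hj0 : jj 0 < ℓ := by
    have := hFle 0 hm.le
    simpa [hF] using this
  have key : ∀ (i : ℕ) (hi : i ≤ (m' + 1)),
      (e ⟨jj 0, hj0⟩ : ℕ) + ∑ k ∈ Finset.range i, (cmi k + 1)
        ≤ (e ⟨F i, hFle i hi⟩ : ℕ) := by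
    intro i
    induction i with
    | zero =>
      intro hi
      rw [ecast (F 0) (jj 0) (hFle 0 hi) hj0 (by simp [hF])]
      simp
    | succ k ih =>
      intro hi
      have hk' : k < (m' + 1) := hi
      have hk'' : k ≤ (m' + 1) := hk'.le
      have hjF := hFjj k hk'
      have h1 : jj k + ri k < ℓ := (hr k hk').2.2
      have h2 : jj k < ℓ := by omega
      have hgap := (hcon (jj k) (cmi k) (cpi k) (ri k) (hmem k hk') h1 h2).1
      have hlt : (e ⟨jj k, h2⟩ : ℕ) < (e ⟨jj k + ri k, h1⟩ : ℕ) :=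
        Fin.lt_def.1 (hmono (Fin.mk_lt_mk.2 (by have := (hr k hk').1; omega)))
      have hstep : (e ⟨jj k, h2⟩ : ℕ) + cmi k + 1 ≤ (e ⟨jj k + ri k, h1⟩ : ℕ) := by
        omega
      have hFsucc : F (k + 1) = jj k + ri k := by
        have hjF' : jj k = jj 0 + ∑ x ∈ Finset.range k, ri x := by
          rw [hjF]
        simp only [hF, Finset.sum_range_succ]
        omega
      have hek : (e ⟨F k, hFle k hk''⟩ : ℕ) = (e ⟨jj k, h2⟩ : ℕ) :=
        ecast _ _ _ _ (by omega)
      have heks : (e ⟨F (k + 1), hFle (k + 1) hi⟩ : ℕ) = (e ⟨jj k + ri k, h1⟩ : ℕ) :=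
        ecast _ _ _ _ hFsucc
      have ihk := ih hk''
      rw [Finset.sum_range_succ]
      omega
  -- final combination
  have hkeym := key (m' + 1) le_rfl
  have hlast : ℓ - 1 < ℓ := by omega
  have hFmle : F (m' + 1) ≤ ℓ - 1 := by omega
  have htail : (e ⟨F (m' + 1), hFle (m' + 1) le_rfl⟩ : ℕ) + (ℓ - 1 - F (m' + 1)) ≤ (e ⟨ℓ - 1, hlast⟩ : ℕ) := by
    have := hmono' (ℓ - 1 - F (m' + 1)) (F (m' + 1)) (hFle (m' + 1) le_rfl) (by omega)
    rwa [ecast (F (m' + 1) + (ℓ - 1 - F (m' + 1))) (ℓ - 1) (by omega) hlast (by omega)] at this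
  have hhead : (e ⟨0, hℓ⟩ : ℕ) + jj 0 ≤ (e ⟨jj 0, hj0⟩ : ℕ) := by
    have := hmono' (jj 0) 0 hℓ (by omega)
    rwa [ecast (0 + jj 0) (jj 0) (by omega) hj0 (by omega)] at this
  have hwin' := hwin ⟨0, hℓ⟩ ⟨ℓ - 1, hlast⟩
  have hsum : ∑ k ∈ Finset.range (m' + 1), (cmi k + 1)
      = (∑ k ∈ Finset.range (m' + 1), ri k) + ∑ k ∈ Finset.range (m' + 1), (cmi k - ri k + 1) := by
    rw [← Finset.sum_add_distrib]
    apply Finset.sum_congr rfl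
    intro k hk
    have := (hr k (Finset.mem_range.1 hk)).2.1
    omega
  have hFmval : F (m' + 1) = jj 0 + ∑ k ∈ Finset.range (m' + 1), ri k := rfl
  omega
end

section
/- Two (ℓ,w,c)-queries q = (s,w,c) and q' = (s',w,c) are isomorphic (there is a bijection π on variables and typesets fixing all typesets with π(s[i]) = s'[i] for all i) if and only if there exist homomorphisms in both directions, i.e. q ⪰ q' and q' ⪰ q. -/
/-- A typeset: a finite nonempty set of types. -/
def TSet (Γ : Type*) := {Δ : Finset Γ // Δ.Nonempty}

/-- The set of variable letters occurring in the query string `s`. -/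
def varsSet {V Γ : Type*} {ℓ : ℕ} (s : Fin ℓ → V ⊕ TSet Γ) : Set (V ⊕ TSet Γ) :=
  {z | (∃ x : V, z = Sum.inl x) ∧ ∃ i, s i = z}

/-- `h` is a homomorphism from the query with string `src` to the query with
string `tgt`: a substitution mapping each typeset to a nonempty subset of
itself, mapping every variable occurring at least twice in `src` to a singleton
if it is mapped to a typeset, and satisfying `h (src i) = tgt i`. -/
def IsDHom {V Γ : Type*} {ℓ : ℕ} (src tgt : Fin ℓ → V ⊕ TSet Γ)
    (h : V ⊕ TSet Γ → V ⊕ TSet Γ) : Prop :=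
  (∀ Δ : TSet Γ, ∃ Δ' : TSet Γ, h (Sum.inr Δ) = Sum.inr Δ' ∧ Δ'.1 ⊆ Δ.1) ∧
  (∀ x : V, (∃ i j : Fin ℓ, i ≠ j ∧ src i = Sum.inl x ∧ src j = Sum.inl x) →
    ∀ Δ : TSet Γ, h (Sum.inl x) = Sum.inr Δ → Δ.1.card = 1) ∧
  (∀ i, h (src i) = tgt i)

/-- The queries with strings `s`, `s'` are isomorphic: a bijection from
`vars(q) ∪ P⁺_fin(Γ)` onto `vars(q') ∪ P⁺_fin(Γ)`, identity on typesets,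
mapping `s i` to `s' i`. -/
def IsIso {V Γ : Type*} {ℓ : ℕ} (s s' : Fin ℓ → V ⊕ TSet Γ) : Prop :=
  ∃ π : (V ⊕ TSet Γ) → (V ⊕ TSet Γ),
    Set.BijOn π (varsSet s ∪ Set.range Sum.inr) (varsSet s' ∪ Set.range Sum.inr) ∧
    (∀ Δ : TSet Γ, π (Sum.inr Δ) = Sum.inr Δ) ∧ (∀ i, π (s i) = s' i)

/-- Two `(ℓ,w,c)`-queries are isomorphic iff there exist homomorphisms in both
directions. -/
theorem stmt10 {V Γ : Type*} {ℓ : ℕ} (s s' : Fin ℓ → V ⊕ TSet Γ) :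
    IsIso s s' ↔ ((∃ h, IsDHom s s' h) ∧ (∃ h, IsDHom s' s h)) := by
  classical
  constructor
  · rintro ⟨π, hbij, hfix, hmap⟩
    have hsA : ∀ i, s i ∈ varsSet s ∪ Set.range Sum.inr := by
      intro i
      rcases hq : s i with x | Δ
      · exact Or.inl ⟨⟨x, rfl⟩, ⟨i, hq⟩⟩
      · exact Or.inr ⟨Δ, rfl⟩
    constructor
    · refine ⟨π, fun Δ => ⟨Δ, hfix Δ, subset_rfl⟩, ?_, hmap⟩
      intro x ⟨i, j, hij, hi, hj⟩ Δ hπ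
      have hxA : Sum.inl x ∈ varsSet s ∪ Set.range Sum.inr :=
        Or.inl ⟨⟨x, rfl⟩, ⟨i, hi⟩⟩
      have hΔA : (Sum.inr Δ : V ⊕ TSet Γ) ∈ varsSet s ∪ Set.range Sum.inr :=
        Or.inr ⟨Δ, rfl⟩
      have : (Sum.inl x : V ⊕ TSet Γ) = Sum.inr Δ :=
        hbij.injOn hxA hΔA (by rw [hπ, hfix])
      exact absurd this (by simp)
    · set h' : V ⊕ TSet Γ → V ⊕ TSet Γ := fun z =>
        if hz : ∃ a ∈ varsSet s ∪ Set.range Sum.inr, π a = z then hz.choose else z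
        with hh'
      have key : ∀ a ∈ varsSet s ∪ Set.range Sum.inr, h' (π a) = a := by
        intro a ha
        have hz : ∃ b ∈ varsSet s ∪ Set.range Sum.inr, π b = π a := ⟨a, ha, rfl⟩
        rw [hh']
        simp only [dif_pos hz]
        exact hbij.injOn hz.choose_spec.1 ha hz.choose_spec.2
      have key3 : ∀ i, h' (s' i) = s i := by
        intro i
        rw [← hmap i, key _ (hsA i)]
      refine ⟨h', ?_, ?_, key3⟩
      · intro Δ
        refine ⟨Δ, ?_, subset_rfl⟩
        have := key _ (Or.inr ⟨Δ, rfl⟩ : (Sum.inr Δ : V ⊕ TSet Γ) ∈ _)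
        rwa [hfix] at this
      · intro x ⟨i, j, hij, hi, hj⟩ Δ hΔ
        have h1 : s i = Sum.inr Δ := by rw [← key3 i, hi, hΔ]
        have h2 : π (s i) = s' i := hmap i
        rw [h1, hfix, hi] at h2
        exact absurd h2 (by simp)
  · rintro ⟨⟨h, h1, h2, h3⟩, ⟨g, g1, g2, g3⟩⟩
    have hgh : ∀ i, g (h (s i)) = s i := fun i => by rw [h3, g3]
    have hhg : ∀ i, h (g (s' i)) = s' i := fun i => by rw [g3, h3]
    have hpos : ∀ i Δ, s i = Sum.inr Δ → s' i = Sum.inr Δ := by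
      intro i Δ hi
      obtain ⟨Δ₁, e1, sub1⟩ := h1 Δ
      have hs' : s' i = Sum.inr Δ₁ := by rw [← h3 i, hi, e1]
      obtain ⟨Δ₂, e2, sub2⟩ := g1 Δ₁
      have he : (Sum.inr Δ₂ : V ⊕ TSet Γ) = Sum.inr Δ := by
        rw [← e2, ← hs', g3, hi]
      have hΔ : Δ₂ = Δ := by injection he
      rw [hs']
      congr 1
      exact Subtype.ext (Finset.Subset.antisymm sub1 (hΔ ▸ sub2))
    have hvar : ∀ i x, s i = Sum.inl x → ∃ y, s' i = Sum.inl y := by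
      intro i x hi
      rcases hq : s' i with y | Δ
      · exact ⟨y, rfl⟩
      · obtain ⟨Δ', e, _⟩ := g1 Δ
        have := g3 i
        rw [hq, e, hi] at this
        exact absurd this (by simp)
    have hvar' : ∀ i y, s' i = Sum.inl y → ∃ x, s i = Sum.inl x := by
      intro i y hi
      rcases hq : s i with x | Δ
      · exact ⟨x, rfl⟩
      · have := hpos i Δ hq
        rw [hi] at this
        exact absurd this (by simp)
    set π : V ⊕ TSet Γ → V ⊕ TSet Γ :=
      Sum.elim (fun x => h (Sum.inl x)) (fun Δ => Sum.inr Δ) with hπdef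
    have πfix : ∀ Δ : TSet Γ, π (Sum.inr Δ) = Sum.inr Δ := fun _ => rfl
    have πinl : ∀ x : V, π (Sum.inl x) = h (Sum.inl x) := fun _ => rfl
    have πmap : ∀ i, π (s i) = s' i := by
      intro i
      rcases hq : s i with x | Δ
      · rw [πinl, ← hq, h3]
      · rw [πfix]; exact (hpos i Δ hq).symm
    have hvarimg : ∀ x : V, Sum.inl x ∈ varsSet s → π (Sum.inl x) ∈ varsSet s' := by
      intro x ⟨_, i, hi⟩
      have e : π (Sum.inl x) = s' i := by rw [← hi, πmap]
      obtain ⟨y, hy⟩ := hvar i x hi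
      exact ⟨⟨y, by rw [e, hy]⟩, ⟨i, e.symm⟩⟩
    refine ⟨π, ⟨?_, ?_, ?_⟩, πfix, πmap⟩
    · rintro z hz
      rcases z with x | Δ
      · rcases hz with hv | ⟨Δ, hΔ⟩
        · exact Or.inl (hvarimg x hv)
        · exact absurd hΔ (by simp)
      · exact Or.inr ⟨Δ, rfl⟩
    · rintro a ha b hb hab
      have inlvar : ∀ x : V, Sum.inl x ∈ varsSet s ∪ Set.range Sum.inr →
          ∃ i, s i = Sum.inl x := by
        rintro x (⟨_, i, hi⟩ | ⟨Δ, hΔ⟩)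
        · exact ⟨i, hi⟩
        · exact absurd hΔ (by simp)
      have inlimg : ∀ x : V, (∃ i, s i = Sum.inl x) → ∃ y, π (Sum.inl x) = Sum.inl y := by
        rintro x ⟨i, hi⟩
        obtain ⟨y, hy⟩ := hvar i x hi
        exact ⟨y, by rw [← hi, πmap, hy]⟩
      rcases a with x | Δ <;> rcases b with x' | Δ'
      · obtain ⟨i, hi⟩ := inlvar x ha
        obtain ⟨j, hj⟩ := inlvar x' hb
        rw [πinl, πinl] at hab
        have : g (h (Sum.inl x)) = g (h (Sum.inl x')) := by rw [hab]
        rw [← hi, ← hj, hgh, hgh] at this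
        rw [← hi, ← hj, this]
      · obtain ⟨y, hy⟩ := inlimg x (inlvar x ha)
        rw [hy, πfix] at hab
        exact absurd hab (by simp)
      · obtain ⟨y, hy⟩ := inlimg x' (inlvar x' hb)
        rw [hy, πfix] at hab
        exact absurd hab.symm (by simp)
      · rw [πfix, πfix] at hab
        rw [hab]
    · rintro b hb
      rcases b with y | Δ
      · have hvb : Sum.inl y ∈ varsSet s' := by
          rcases hb with hv | ⟨Δ, hΔ⟩
          · exact hv
          · exact absurd hΔ (by simp)
        obtain ⟨_, i, hi⟩ := hvb
        obtain ⟨x, hx⟩ := hvar' i y hi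
        refine ⟨Sum.inl x, Or.inl ⟨⟨x, rfl⟩, ⟨i, hx⟩⟩, ?_⟩
        rw [← hx, πmap, hi]
      · exact ⟨Sum.inr Δ, Or.inr ⟨Δ, rfl⟩, rfl⟩
end
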